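/- arXiv:2010.05992 — 2 statements merged into one kernel-verified Lean document; each statement's English description precedes it below -/
import Mathlib

section
/- For every r ≥ 3 there exists a constant c > 0 such that for every n ≥ 1 there exists a family F of vectors in {0,1}^n containing no focal family of size r with |F| ≥ c·(2/r^{1/(r−1)})^n. -/
/-!
Deletion method. Over `{0,1}` a focal family is determined by its focus together with, at each
coordinate, the member (if any) that deviates from the focus there; so at most `2ⁿ rⁿ` of the
`r`-subsets of the cube contain a focal family. A uniformly random `m`-subset of the cube contains
a fixed `r`-set with probability `C(m,r)/C(2ⁿ,r) ≤ (m/2ⁿ)^r` (made deterministic by double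
counting), hence on average at most `2ⁿ rⁿ (m/2ⁿ)^r` such sets. With `q = 2/r^(1/(r-1))`, i.e.
`r q^(r-1) = 2^(r-1)`, and `m ≈ qⁿ/4`, this is at most `m/2`; removing one point of each such set
leaves at least `m/2 ≥ qⁿ/8` points and no focal family.
-/

/-- A family consisting of a focus vector `x₀` and `m` further vectors `xs 0, …, xs (m-1)`
in `α^n` is *focal with focus `x₀`* if for every coordinate `i`, at most one of the
vectors `xs j` differs from `x₀` at `i` (equivalently, at least `m - 1` of the `m`
entries `xs j i` are equal to `x₀ i`). -/
def IsFocalWithFocus {α : Type*} {n m : ℕ} (x₀ : Fin n → α) (xs : Fin m → Fin n → α) : Prop :=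
  ∀ i : Fin n, ∀ j j' : Fin m, xs j i ≠ x₀ i → xs j' i ≠ x₀ i → j = j'

/-- A family `F` of vectors contains a focal family of size `r` if there are `r`
distinct members `x₀, xs 0, …, xs (r-2)` of `F` that are focal with focus `x₀`. -/
def ContainsFocalFamily {α : Type*} {n : ℕ} (F : Finset (Fin n → α)) (r : ℕ) : Prop :=
  ∃ x₀ ∈ F, ∃ xs : Fin (r - 1) → Fin n → α,
    (∀ j, xs j ∈ F) ∧ Function.Injective xs ∧ (∀ j, xs j ≠ x₀) ∧ IsFocalWithFocus x₀ xs

open Finset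

namespace Nat

theorem choose_mul_pow_le_choose_mul_pow {m N : ℕ} (h : m ≤ N) (r : ℕ) :
    m.choose r * N ^ r ≤ N.choose r * m ^ r := by
  suffices m.descFactorial r * N ^ r ≤ N.descFactorial r * m ^ r by
    simp only [descFactorial_eq_factorial_mul_choose, mul_assoc] at this
    exact Nat.le_of_mul_le_mul_left this r.factorial_pos
  induction r with
  | zero => simp
  | succ r ih =>
    have hstep : (m - r) * N ≤ (N - r) * m := by
      rcases le_or_gt r m with hrm | hrm
      · zify [hrm, hrm.trans h]; nlinarith
      · simp [Nat.sub_eq_zero_of_le hrm.le]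
    rw [descFactorial_succ, descFactorial_succ, pow_succ, pow_succ]
    calc (m - r) * m.descFactorial r * (N ^ r * N)
        = (m.descFactorial r * N ^ r) * ((m - r) * N) := by ring
      _ ≤ (N.descFactorial r * m ^ r) * ((N - r) * m) := Nat.mul_le_mul ih hstep
      _ = (N - r) * N.descFactorial r * (m ^ r * m) := by ring

theorem cast_choose_div_choose_le {m N : ℕ} (h : m ≤ N) (r : ℕ) :
    (m.choose r / N.choose r : ℝ) ≤ ((m : ℝ) / N) ^ r := by
  rcases (N.choose r).eq_zero_or_pos with hN | hN
  · simp [hN]; positivity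
  have hNr : 0 < N ^ r := hN.trans_le (choose_le_pow N r)
  have key := (Nat.cast_le (α := ℝ)).2 (choose_mul_pow_le_choose_mul_pow h r)
  push_cast at key
  rw [div_pow, div_le_div_iff₀ (by exact_mod_cast hN) (by exact_mod_cast hNr)]
  linarith

end Nat

namespace Finset

variable {α : Type*} [DecidableEq α]

theorem exists_subset_forall_not_subset_card_le (S : Finset α) (𝒯 : Finset (Finset α))
    (h𝒯 : ∀ T ∈ 𝒯, T.Nonempty) :
    ∃ F ⊆ S, (∀ T ∈ 𝒯, ¬ T ⊆ F) ∧ #S ≤ #F + #{T ∈ 𝒯 | T ⊆ S} := by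
  induction 𝒯 using Finset.induction_on with
  | empty => exact ⟨S, subset_rfl, by simp, by simp⟩
  | insert T 𝒯 hT ih =>
    obtain ⟨F, hFS, hF, hcard⟩ := ih fun T' hT' => h𝒯 T' (mem_insert_of_mem hT')
    by_cases hTF : T ⊆ F
    · obtain ⟨x, hx⟩ := h𝒯 T (mem_insert_self T 𝒯)
      refine ⟨F.erase x, (erase_subset x F).trans hFS, ?_, ?_⟩
      · rintro T' hT' hT'F
        rcases mem_insert.1 hT' with rfl | hT'
        · simpa using hT'F hx
        · exact hF T' hT' (hT'F.trans (erase_subset x F))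
      · rw [filter_insert, if_pos (hTF.trans hFS), card_insert_of_notMem (by simp [hT]),
          card_erase_of_mem (hTF hx)]
        have := card_pos.2 ⟨x, hTF hx⟩
        omega
    · refine ⟨F, hFS, ?_, hcard.trans ?_⟩
      · rintro T' hT'
        rcases mem_insert.1 hT' with rfl | hT'
        · exact hTF
        · exact hF T' hT'
      · exact Nat.add_le_add_left (card_le_card (filter_subset_filter _ (subset_insert T 𝒯))) _

variable [Fintype α]

theorem exists_card_eq_card_filter_subset_mul_choose_le {𝒯 : Finset (Finset α)} {r m : ℕ}
    (h𝒯 : ∀ T ∈ 𝒯, #T = r) (hrm : r ≤ m) (hm : m ≤ Fintype.card α) :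
    ∃ S : Finset α, #S = m ∧ #{T ∈ 𝒯 | T ⊆ S} * (Fintype.card α).choose r ≤ #𝒯 * m.choose r := by
  set N := Fintype.card α
  have hsum : ∑ S ∈ powersetCard m univ, #{T ∈ 𝒯 | T ⊆ S} = #𝒯 * (N - r).choose (m - r) := by
    have := sum_card_bipartiteAbove_eq_sum_card_bipartiteBelow (s := 𝒯) (t := powersetCard m univ)
      (r := fun T S => T ⊆ S)
    simp only [bipartiteAbove, bipartiteBelow] at this
    rw [← this, ← smul_eq_mul, ← sum_const]
    refine sum_congr rfl fun T hT => ?_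
    rw [card_filter_powersetCard_subset _ _ _ (subset_univ T) (by simp [h𝒯 T hT, hrm]),
      card_univ, h𝒯 T hT]
  obtain ⟨S, hS, hSle⟩ := exists_le_of_sum_le (s := powersetCard m univ)
    (powersetCard_nonempty.2 (by rw [card_univ]; exact hm))
    (f := fun S => #{T ∈ 𝒯 | T ⊆ S} * N.choose m) (g := fun _ => #𝒯 * (N - r).choose (m - r)) (by
      rw [← sum_mul, hsum, sum_const, card_powersetCard, card_univ, smul_eq_mul, mul_comm])
  refine ⟨S, (mem_powersetCard.1 hS).2, Nat.le_of_mul_le_mul_right ?_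
    (Nat.choose_pos (Nat.sub_le_sub_right hm r))⟩
  calc #{T ∈ 𝒯 | T ⊆ S} * N.choose r * (N - r).choose (m - r)
      = #{T ∈ 𝒯 | T ⊆ S} * N.choose m * m.choose r := by rw [mul_assoc, ← Nat.choose_mul hrm]; ring
    _ ≤ #𝒯 * (N - r).choose (m - r) * m.choose r := Nat.mul_le_mul_right _ hSle
    _ = #𝒯 * m.choose r * (N - r).choose (m - r) := by ring

theorem exists_card_eq_card_filter_subset_le {𝒯 : Finset (Finset α)} {r m : ℕ}
    (h𝒯 : ∀ T ∈ 𝒯, #T = r) (hm : m ≤ Fintype.card α) :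
    ∃ S : Finset α, #S = m ∧
      (#{T ∈ 𝒯 | T ⊆ S} : ℝ) ≤ #𝒯 * m.choose r / (Fintype.card α).choose r := by
  rcases lt_or_ge m r with hmr | hrm
  · obtain ⟨S, -, hS⟩ :=
      exists_subset_card_eq (s := (univ : Finset α)) (n := m) (by rwa [card_univ])
    refine ⟨S, hS, ?_⟩
    rw [filter_false_of_mem fun T hT hTS => (card_le_card hTS).not_gt (by rwa [h𝒯 T hT, hS])]
    simp only [card_empty, CharP.cast_eq_zero]
    positivity
  obtain ⟨S, hS, hSle⟩ := exists_card_eq_card_filter_subset_mul_choose_le h𝒯 hrm hm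
  refine ⟨S, hS, ?_⟩
  rw [le_div_iff₀ (by exact_mod_cast Nat.choose_pos (hrm.trans hm))]
  exact_mod_cast hSle

theorem exists_forall_not_subset_card_ge {𝒯 : Finset (Finset α)} {r m : ℕ}
    (h𝒯 : ∀ T ∈ 𝒯, #T = r) (hr : r ≠ 0) (hm : m ≤ Fintype.card α) :
    ∃ F : Finset α, (∀ T ∈ 𝒯, ¬ T ⊆ F) ∧
      (m : ℝ) - #𝒯 * m.choose r / (Fintype.card α).choose r ≤ #F := by
  obtain ⟨S, hS, hbad⟩ := exists_card_eq_card_filter_subset_le h𝒯 hm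
  obtain ⟨F, -, hF, hcard⟩ := exists_subset_forall_not_subset_card_le S 𝒯
    fun T hT => card_pos.1 (by rw [h𝒯 T hT]; omega)
  refine ⟨F, hF, ?_⟩
  have : (m : ℝ) ≤ #F + #{T ∈ 𝒯 | T ⊆ S} := by rw [← hS]; exact_mod_cast hcard
  linarith

end Finset

instance {α : Type*} [DecidableEq α] {n m : ℕ} (x₀ : Fin n → α) (xs : Fin m → Fin n → α) :
    Decidable (IsFocalWithFocus x₀ xs) := by
  unfold IsFocalWithFocus; infer_instance

theorem card_insert_image_eq {β : Type*} [DecidableEq β] {m : ℕ} {x₀ : β} {xs : Fin m → β}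
    (hinj : Function.Injective xs) (hne : ∀ j, xs j ≠ x₀) :
    #(insert x₀ (univ.image xs)) = m + 1 := by
  rw [card_insert_of_notMem (by simpa [eq_comm] using hne), card_image_of_injective _ hinj,
    card_univ, Fintype.card_fin]

theorem insert_image_subset {β : Type*} [DecidableEq β] {m : ℕ} {x₀ : β} {xs : Fin m → β}
    {F : Finset β} (hx₀ : x₀ ∈ F) (hxs : ∀ j, xs j ∈ F) : insert x₀ (univ.image xs) ⊆ F := by
  simpa [insert_subset_iff, hx₀, image_subset_iff] using hxs

theorem ContainsFocalFamily.exists_subset_card_eq {α : Type*} [DecidableEq α] {n r : ℕ}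
    {F : Finset (Fin n → α)} (hF : ContainsFocalFamily F r) (hr : 1 ≤ r) :
    ∃ T ⊆ F, #T = r ∧ ContainsFocalFamily T r := by
  obtain ⟨x₀, hx₀, xs, hxsF, hinj, hne, hfocal⟩ := hF
  refine ⟨insert x₀ (univ.image xs), insert_image_subset hx₀ hxsF, ?_, x₀, mem_insert_self _ _,
    xs, fun j => mem_insert_of_mem (mem_image_of_mem xs (mem_univ j)), hinj, hne, hfocal⟩
  rw [card_insert_image_eq hinj hne]
  omega

theorem card_isFocalWithFocus_le (n m : ℕ) :
    Fintype.card {p : (Fin n → Bool) × (Fin m → Fin n → Bool) // IsFocalWithFocus p.1 p.2}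
      ≤ 2 ^ n * (m + 1) ^ n := by
  let decode (p : (Fin n → Bool) × (Fin n → Option (Fin m))) :
      {p : (Fin n → Bool) × (Fin m → Fin n → Bool) // IsFocalWithFocus p.1 p.2} :=
    ⟨(p.1, fun j i => if p.2 i = some j then !p.1 i else p.1 i), fun i j j' hj hj' => by
      by_cases h : p.2 i = some j <;> by_cases h' : p.2 i = some j' <;> simp_all⟩
  have hdecode : Function.Surjective decode := by
    rintro ⟨⟨x₀, xs⟩, hfocal⟩
    refine ⟨(x₀, fun i => if h : ∃ j, xs j i ≠ x₀ i then some h.choose else none), ?_⟩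
    refine Subtype.ext (Prod.ext rfl (funext₂ fun j i => ?_))
    simp only [decode]
    split_ifs with h hj hj
    · rw [← Option.some_inj.1 hj]
      exact (Bool.eq_not.2 h.choose_spec).symm
    · by_contra hne
      exact hj (congrArg some (hfocal i _ _ h.choose_spec (Ne.symm hne)))
    · exact hj.elim
    · exact (not_exists_not.1 h j).symm
  simpa using Fintype.card_le_of_surjective decode hdecode

open Classical in
noncomputable def focalSets (α : Type*) [Fintype α] (n r : ℕ) : Finset (Finset (Fin n → α)) :=
  {T ∈ powersetCard r univ | ContainsFocalFamily T r}

theorem mem_focalSets {α : Type*} [Fintype α] {n r : ℕ} {T : Finset (Fin n → α)} :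
    T ∈ focalSets α n r ↔ #T = r ∧ ContainsFocalFamily T r := by
  simp [focalSets]

theorem card_focalSets_le (n : ℕ) {r : ℕ} (hr : 1 ≤ r) :
    #(focalSets Bool n r) ≤ 2 ^ n * r ^ n := by
  let support
      (p : {p : (Fin n → Bool) × (Fin (r - 1) → Fin n → Bool) // IsFocalWithFocus p.1 p.2}) :
      Finset (Fin n → Bool) :=
    insert p.1.1 (univ.image p.1.2)
  have hsupport : focalSets Bool n r ⊆ univ.image support := by
    intro T hT
    obtain ⟨hTcard, x₀, hx₀, xs, hxsT, hinj, hne, hfocal⟩ := mem_focalSets.1 hT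
    refine mem_image.2 ⟨⟨(x₀, xs), hfocal⟩, mem_univ _, eq_of_subset_of_card_le
      (insert_image_subset hx₀ hxsT) ?_⟩
    simp only [support, card_insert_image_eq hinj hne, hTcard]
    omega
  calc #(focalSets Bool n r) ≤ #(univ.image support) := card_le_card hsupport
    _ ≤ 2 ^ n * (r - 1 + 1) ^ n := card_image_le.trans (card_isFocalWithFocus_le n (r - 1))
    _ = 2 ^ n * r ^ n := by rw [Nat.sub_add_cancel hr]

theorem Real.mul_div_rpow_one_div_pow {x : ℝ} (hx : 0 < x) (a : ℝ) {k : ℕ} (hk : k ≠ 0) :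
    x * (a / x ^ ((1 : ℝ) / k)) ^ k = a ^ k := by
  rw [div_pow, one_div, Real.rpow_inv_natCast_pow hx.le hk]
  field_simp

theorem card_focalSets_mul_choose_div_le {n r m : ℕ} {q : ℝ} (hr : 2 ≤ r)
    (hq : (r : ℝ) * q ^ (r - 1) = 2 ^ (r - 1)) (hmN : m ≤ 2 ^ n)
    (hm : r ≤ m → (m : ℝ) ≤ q ^ n / 2) :
    (#(focalSets Bool n r) * m.choose r / (2 ^ n).choose r : ℝ) ≤ m / 2 := by
  rcases lt_or_ge m r with hmr | hrm
  · rw [Nat.choose_eq_zero_of_lt hmr]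
    simp only [CharP.cast_eq_zero, mul_zero, zero_div]
    positivity
  obtain ⟨k, rfl⟩ : ∃ k, r = k + 1 := ⟨r - 1, by omega⟩
  push_cast [add_tsub_cancel_right] at hq
  have hx : (m : ℝ) / 2 ^ n ≤ q ^ n / 2 ^ (n + 1) := by
    calc (m : ℝ) / 2 ^ n ≤ q ^ n / 2 / 2 ^ n := by gcongr; exact hm hrm
      _ = q ^ n / 2 ^ (n + 1) := by ring
  calc (#(focalSets Bool n (k + 1)) * m.choose (k + 1) / (2 ^ n).choose (k + 1) : ℝ)
      ≤ 2 ^ n * (k + 1 : ℝ) ^ n * ((m : ℝ) / 2 ^ n) ^ (k + 1) := by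
        rw [mul_div_assoc]
        gcongr
        · exact_mod_cast card_focalSets_le n (by omega)
        · exact_mod_cast Nat.cast_choose_div_choose_le hmN (k + 1)
    _ = (2 ^ n * ((m : ℝ) / 2 ^ n)) * (k + 1 : ℝ) ^ n * ((m : ℝ) / 2 ^ n) ^ k := by ring
    _ ≤ m * (k + 1 : ℝ) ^ n * (q ^ n / 2 ^ (n + 1)) ^ k := by
        rw [mul_div_cancel₀ _ (by positivity)]; gcongr
    _ = m * ((k + 1 : ℝ) * q ^ k) ^ n / (2 ^ k) ^ n / 2 ^ k := by
        rw [div_pow, pow_succ, mul_pow, ← pow_mul, ← pow_mul, mul_comm n k, pow_mul, pow_mul,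
          mul_pow]
        ring
    _ = m / 2 ^ k := by rw [hq, mul_div_assoc, div_self (by positivity), mul_one]
    _ ≤ m / 2 := by gcongr; exact le_self_pow₀ one_le_two (by omega)

/-- For every `r ≥ 3` there is `c > 0` such that for every `n ≥ 1` there is a family of
vectors in `{0,1}^n` with no focal family of size `r` of cardinality at least
`c·(2/r^(1/(r-1)))^n`. -/
theorem focal_family_lower_bound (r : ℕ) (hr : 3 ≤ r) :
    ∃ c : ℝ, 0 < c ∧ ∀ n : ℕ, 1 ≤ n →
      ∃ F : Finset (Fin n → Bool),
        ¬ ContainsFocalFamily F r ∧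
        c * (2 / (r : ℝ) ^ ((1 : ℝ) / ((r : ℝ) - 1))) ^ n ≤ (F.card : ℝ) := by
  set q : ℝ := 2 / (r : ℝ) ^ ((1 : ℝ) / ((r : ℝ) - 1))
  have hq : (r : ℝ) * q ^ (r - 1) = 2 ^ (r - 1) := by
    have := Real.mul_div_rpow_one_div_pow (x := r) (by positivity) 2 (k := r - 1) (by omega)
    rwa [Nat.cast_sub (by omega), Nat.cast_one] at this
  have hq_pos : 0 < q := div_pos two_pos (Real.rpow_pos_of_pos (by positivity) _)
  have hq_le : q ≤ 2 := div_le_self zero_le_two (Real.one_le_rpow (by norm_cast; omega)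
    (div_nonneg zero_le_one (sub_nonneg.2 (by norm_cast; omega))))
  refine ⟨1 / 8, by norm_num, fun n _ => ?_⟩
  set m := ⌈q ^ n / 4⌉₊
  have hm_ge : q ^ n / 4 ≤ m := Nat.le_ceil _
  have hm_le : r ≤ m → (m : ℝ) ≤ q ^ n / 2 := fun hrm => by
    have h2 : (2 : ℝ) < q ^ n / 4 := by exact_mod_cast Nat.lt_ceil.1 (show 2 < m by omega)
    linarith [Nat.ceil_le_two_mul (a := q ^ n / 4) (by linarith)]
  have hmN : m ≤ 2 ^ n := Nat.ceil_le.2 <| by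
    push_cast
    linarith [pow_le_pow_left₀ hq_pos.le hq_le n, pow_pos hq_pos n]
  obtain ⟨F, hF, hFcard⟩ := exists_forall_not_subset_card_ge (𝒯 := focalSets Bool n r)
    (fun T hT => (mem_focalSets.1 hT).1) (by omega) (m := m) (by simpa using hmN)
  refine ⟨F, fun hfocal => ?_, ?_⟩
  · obtain ⟨T, hTF, hT, hTfocal⟩ := hfocal.exists_subset_card_eq (by omega)
    exact hF T (mem_focalSets.2 ⟨hT, hTfocal⟩) hTF
  · have := card_focalSets_mul_choose_div_le (by omega) hq hmN hm_le
    simp only [Fintype.card_fun, Fintype.card_bool, Fintype.card_fin] at hFcard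
    linarith
end

section
/- Let r ≥ 3 and n ≥ 1, and let F be a family of subsets of [n] = {1,…,n} containing no 1-focal family of size r. Then |F| ≤ (r−1)·Σ_{k=0}^{n} C(n, ⌈(r−2)k/(r−1)⌉) / C(k, ⌈(r−2)k/(r−1)⌉), where C(·,·) denotes the binomial coefficient. -/
/-- A family consisting of a focus set `A₀` and `m` further sets `As 0, …, As (m-1)`
(viewed as subsets of `[n]`, i.e. characteristic vectors in `{0,1}^n`) is *1-focal with
focus `A₀`* if for every `i ∈ A₀`, at most one of the sets `As j` misses `i`
(equivalently, at least `m - 1` of the `m` characteristic-vector entries equal `1`). -/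
def IsOneFocalWithFocus {n m : ℕ} (A₀ : Finset (Fin n)) (As : Fin m → Finset (Fin n)) : Prop :=
  ∀ i ∈ A₀, ∀ j j' : Fin m, i ∉ As j → i ∉ As j' → j = j'

/-- A family `F` of subsets of `[n]` contains a 1-focal family of size `r` if some `r`
distinct members `A₀, As 0, …, As (r-2)` of `F` are 1-focal with focus `A₀`. -/
def ContainsOneFocalFamily {n : ℕ} (F : Finset (Finset (Fin n))) (r : ℕ) : Prop :=
  ∃ A₀ ∈ F, ∃ As : Fin (r - 1) → Finset (Fin n),
    (∀ j, As j ∈ F) ∧ Function.Injective As ∧ (∀ j, As j ≠ A₀) ∧ IsOneFocalWithFocus A₀ As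

/-! Fix a layer of members of size `k`, and let `t = ⌈(r-2)k/(r-1)⌉` and `d = k - t`, so that
`r - 1` pairwise disjoint `d`-subsets fit into a `k`-set. Say a `t`-subset of `A ∈ F` is owned by
`A` if no other member of `F` of size `k` contains it; different members own different sets, so the
layer owns at most `C(n, t)` sets. If `D₁, …, D_{r-1}` are disjoint `d`-subsets of `A` and no
`A \ Dᵢ` is owned by `A`, the members `Bᵢ ⊇ A \ Dᵢ` witnessing this miss points of `A` only
inside `Dᵢ`, so `A, B₁, …, B_{r-1}` would be a 1-focal family. Thus every such tuple has a block
with owned complement, and double counting the tuples shows that `A` owns at least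
`C(k, t)/(r-1)` sets. -/

open Finset Function

section DisjointTuples

variable {α : Type*} [DecidableEq α]

def disjointTuples (j d : ℕ) (s : Finset α) : Finset (Fin j → Finset α) :=
  (Fintype.piFinset fun _ => s.powersetCard d).filter
    fun f => ∀ i i', i ≠ i' → Disjoint (f i) (f i')

def disjointTupleCount : ℕ → ℕ → ℕ → ℕ
  | 0, _, _ => 1
  | j + 1, d, k => k.choose d * disjointTupleCount j d (k - d)

variable {j d : ℕ} {s : Finset α}

theorem mem_disjointTuples {f : Fin j → Finset α} :
    f ∈ disjointTuples j d s ↔ (∀ i, f i ∈ s.powersetCard d) ∧ Pairwise (Disjoint on f) := by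
  simp only [disjointTuples, mem_filter, Fintype.mem_piFinset]
  rfl

theorem cons_mem_disjointTuples_iff {S : Finset α} {g : Fin j → Finset α} :
    Fin.cons S g ∈ disjointTuples (j + 1) d s ↔
      S ∈ s.powersetCard d ∧ g ∈ disjointTuples j d (s \ S) := by
  simp only [mem_disjointTuples, mem_powersetCard, Fin.forall_fin_succ, Pairwise, onFun,
    Fin.cons_zero, Fin.cons_succ, subset_sdiff, ne_eq, Fin.succ_inj, forall_and, not_true_eq_false,
    IsEmpty.forall_iff, eq_comm (a := (0 : Fin (j + 1))), Fin.succ_ne_zero, not_false_eq_true,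
    disjoint_comm (a := S), forall_const, true_and]
  tauto

theorem disjointTupleCount_pos : ∀ {j k : ℕ}, j * d ≤ k → 0 < disjointTupleCount j d k
  | 0, _, _ => Nat.one_pos
  | j + 1, k, h => by
    rw [Nat.succ_mul] at h
    exact Nat.mul_pos (Nat.choose_pos (by omega)) (disjointTupleCount_pos (by omega))

theorem card_disjointTuples :
    ∀ (j : ℕ) (s : Finset α), #(disjointTuples j d s) = disjointTupleCount j d #s
  | 0, s => card_eq_one.2 ⟨isEmptyElim, eq_singleton_iff_unique_mem.2
      ⟨mem_disjointTuples.2 ⟨isEmptyElim, isEmptyElim⟩, fun _ _ => Subsingleton.elim _ _⟩⟩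
  | j + 1, s => by
    have hsplit : #(disjointTuples (j + 1) d s) =
        #((s.powersetCard d).sigma fun S => disjointTuples j d (s \ S)) := by
      refine card_nbij' (fun f => ⟨f 0, Fin.tail f⟩) (fun p => Fin.cons p.1 p.2) ?_ ?_ ?_ ?_
      · intro f hf
        rw [← Fin.cons_self_tail f] at hf
        exact mem_sigma.2 (cons_mem_disjointTuples_iff.1 hf)
      · rintro ⟨S, g⟩ hp
        exact cons_mem_disjointTuples_iff.2 (mem_sigma.1 hp)
      · intro f _
        exact Fin.cons_self_tail f
      · rintro ⟨S, g⟩ _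
        simp
    have hfiber : ∀ S ∈ s.powersetCard d, #(disjointTuples j d (s \ S)) =
        disjointTupleCount j d (#s - d) := by
      intro S hS
      obtain ⟨hSs, hSd⟩ := mem_powersetCard.1 hS
      rw [card_disjointTuples j, card_sdiff_of_subset hSs, hSd]
    rw [hsplit, card_sigma, sum_congr rfl hfiber, sum_const, card_powersetCard, smul_eq_mul,
      disjointTupleCount]

theorem card_filter_apply_eq_le {S : Finset α} (hS : S ∈ s.powersetCard d) (i : Fin (j + 1)) :
    #{f ∈ disjointTuples (j + 1) d s | f i = S} ≤ disjointTupleCount j d (#s - d) := by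
  obtain ⟨hSs, hSd⟩ := mem_powersetCard.1 hS
  rw [← hSd, ← card_sdiff_of_subset hSs, ← card_disjointTuples]
  refine card_le_card_of_injOn (· ∘ i.succAbove) (fun f hf => ?_) fun f hf f' hf' he => ?_
  · obtain ⟨hf, rfl⟩ := mem_filter.1 hf
    obtain ⟨hmem, hdisj⟩ := mem_disjointTuples.1 hf
    refine mem_disjointTuples.2 ⟨fun l => ?_, hdisj.comp_of_injective i.succAbove_right_injective⟩
    obtain ⟨hsub, hcard⟩ := mem_powersetCard.1 (hmem (i.succAbove l))
    exact mem_powersetCard.2 ⟨subset_sdiff.2 ⟨hsub, hdisj (i.succAbove_ne l)⟩, hcard⟩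
  · funext x
    rcases eq_or_ne x i with rfl | hx
    · rw [(mem_filter.1 hf).2, (mem_filter.1 hf').2]
    · obtain ⟨l, rfl⟩ := Fin.exists_succAbove_eq hx
      exact congrFun he l

theorem choose_le_mul_card_of_forall_exists_mem {G : Finset (Finset α)}
    (hG : G ⊆ s.powersetCard d) (hroom : (j + 1) * d ≤ #s)
    (hcover : ∀ f ∈ disjointTuples (j + 1) d s, ∃ i, f i ∈ G) :
    (#s).choose d ≤ (j + 1) * #G := by
  set N := disjointTupleCount j d (#s - d)
  have hN : 0 < N := disjointTupleCount_pos (by rw [Nat.succ_mul] at hroom; omega)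
  have hsub : disjointTuples (j + 1) d s ⊆
      (G ×ˢ univ).biUnion fun p => {f ∈ disjointTuples (j + 1) d s | f p.2 = p.1} := by
    intro f hf
    obtain ⟨i, hi⟩ := hcover f hf
    exact mem_biUnion.2 ⟨(f i, i), mem_product.2 ⟨hi, mem_univ i⟩, mem_filter.2 ⟨hf, rfl⟩⟩
  refine Nat.le_of_mul_le_mul_right ?_ hN
  calc (#s).choose d * N = #(disjointTuples (j + 1) d s) := by
        rw [card_disjointTuples, disjointTupleCount]
    _ ≤ ∑ p ∈ G ×ˢ univ, #{f ∈ disjointTuples (j + 1) d s | f p.2 = p.1} :=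
        (card_le_card hsub).trans card_biUnion_le
    _ ≤ ∑ _p ∈ G ×ˢ (univ : Finset (Fin (j + 1))), N :=
        sum_le_sum fun p hp => card_filter_apply_eq_le (hG (mem_product.1 hp).1) p.2
    _ = (j + 1) * #G * N := by
        rw [sum_const, card_product, card_univ, Fintype.card_fin, smul_eq_mul, mul_comm #G]

end DisjointTuples

section OwnedSubsets

variable {α : Type*} [DecidableEq α]

def ownedSubsets (F : Finset (Finset α)) (A : Finset α) (t : ℕ) : Finset (Finset α) :=
  (A.powersetCard t).filter fun T => ∀ B ∈ F, #B = #A → T ⊆ B → B = A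

theorem mem_ownedSubsets {F : Finset (Finset α)} {A T : Finset α} {t : ℕ} :
    T ∈ ownedSubsets F A t ↔ T ∈ A.powersetCard t ∧ ∀ B ∈ F, #B = #A → T ⊆ B → B = A :=
  mem_filter

theorem disjoint_ownedSubsets {F : Finset (Finset α)} {A A' : Finset α} (hA' : A' ∈ F)
    (hcard : #A' = #A) (hne : A ≠ A') (t : ℕ) :
    Disjoint (ownedSubsets F A t) (ownedSubsets F A' t) := by
  refine disjoint_left.2 fun T hT hT' => hne ?_
  exact ((mem_ownedSubsets.1 hT).2 A' hA' hcard
    (mem_powersetCard.1 (mem_ownedSubsets.1 hT').1).1).symm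

end OwnedSubsets

section Focal

variable {n : ℕ} {F : Finset (Finset (Fin n))} {A : Finset (Fin n)}

theorem exists_sdiff_owned_of_pairwise_disjoint {m : ℕ} (hF : ¬ ContainsOneFocalFamily F (m + 2))
    (hA : A ∈ F) {f : Fin (m + 1) → Finset (Fin n)} (hf : Pairwise (Disjoint on f)) :
    ∃ i, ∀ B ∈ F, #B = #A → A \ f i ⊆ B → B = A := by
  by_contra! h
  choose B hBF hBcard hBsup hBA using h
  have hmiss : ∀ i, ∀ x ∈ A, x ∉ B i → x ∈ f i := fun i x hx hxB => by
    by_contra hxf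
    exact hxB (hBsup i (mem_sdiff.2 ⟨hx, hxf⟩))
  have hunique : ∀ {i i' x}, x ∈ f i → x ∈ f i' → i = i' := fun hx hx' => by
    by_contra hii'
    exact disjoint_left.1 (hf hii') hx hx'
  refine hF ⟨A, hA, B, hBF, fun i i' hB => ?_, hBA, fun x hx i i' hxi hxi' => ?_⟩
  · obtain ⟨x, hx⟩ : (A \ B i).Nonempty := sdiff_nonempty.2 fun hAB =>
      hBA i (eq_of_subset_of_card_le hAB (hBcard i).le).symm
    obtain ⟨hxA, hxB⟩ := mem_sdiff.1 hx
    exact hunique (hmiss i x hxA hxB) (hmiss i' x hxA (hB ▸ hxB))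
  · exact hunique (hmiss i x hx hxi) (hmiss i' x hx hxi')

theorem choose_le_mul_card_ownedSubsets {m t : ℕ} (hF : ¬ ContainsOneFocalFamily F (m + 2))
    (hA : A ∈ F) (ht : t ≤ #A) (hmt : m * #A ≤ (m + 1) * t) :
    (#A).choose t ≤ (m + 1) * #(ownedSubsets F A t) := by
  set d := #A - t
  set G := {D ∈ A.powersetCard d | A \ D ∈ ownedSubsets F A t}
  have hroom : (m + 1) * d ≤ #A := by
    rw [Nat.mul_sub, Nat.succ_mul]
    omega
  have hcover : ∀ f ∈ disjointTuples (m + 1) d A, ∃ i, f i ∈ G := by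
    intro f hf
    obtain ⟨hmem, hdisj⟩ := mem_disjointTuples.1 hf
    obtain ⟨i, hi⟩ := exists_sdiff_owned_of_pairwise_disjoint hF hA hdisj
    obtain ⟨hsub, hcard⟩ := mem_powersetCard.1 (hmem i)
    refine ⟨i, mem_filter.2 ⟨hmem i, mem_ownedSubsets.2 ⟨mem_powersetCard.2 ⟨sdiff_subset, ?_⟩, hi⟩⟩⟩
    rw [card_sdiff_of_subset hsub, hcard]
    omega
  have hGowned : #G ≤ #(ownedSubsets F A t) := by
    refine card_le_card_of_injOn (A \ ·) (fun D hD => (mem_filter.1 hD).2) fun D hD D' hD' h => ?_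
    have hsub : ∀ {D}, D ∈ G → A \ (A \ D) = D := fun hD =>
      Finset.sdiff_sdiff_eq_self (mem_powersetCard.1 (mem_filter.1 hD).1).1
    rw [← hsub hD, ← hsub hD']
    exact congrArg (A \ ·) h
  calc (#A).choose t = (#A).choose d := (Nat.choose_symm ht).symm
    _ ≤ (m + 1) * #G := choose_le_mul_card_of_forall_exists_mem (filter_subset _ _) hroom hcover
    _ ≤ (m + 1) * #(ownedSubsets F A t) := Nat.mul_le_mul_left _ hGowned

theorem card_filter_card_eq_mul_choose_le {m k t : ℕ} (hF : ¬ ContainsOneFocalFamily F (m + 2))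
    (ht : t ≤ k) (hmt : m * k ≤ (m + 1) * t) :
    #{A ∈ F | #A = k} * k.choose t ≤ (m + 1) * n.choose t := by
  set L := {A ∈ F | #A = k}
  have hdisj : (L : Set (Finset (Fin n))).PairwiseDisjoint (ownedSubsets F · t) :=
    fun A hA A' hA' hne => by
      obtain ⟨-, hAk⟩ := mem_filter.1 hA
      obtain ⟨hA'F, hA'k⟩ := mem_filter.1 hA'
      exact disjoint_ownedSubsets hA'F (hA'k.trans hAk.symm) hne t
  have hunion : #(L.biUnion (ownedSubsets F · t)) ≤ n.choose t := by
    calc #(L.biUnion (ownedSubsets F · t)) ≤ #((univ : Finset (Fin n)).powersetCard t) :=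
          card_le_card <| biUnion_subset.2 fun A _ =>
            fun T hT => powersetCard_mono (subset_univ A) (mem_ownedSubsets.1 hT).1
      _ = n.choose t := by rw [card_powersetCard, card_univ, Fintype.card_fin]
  calc #L * k.choose t = ∑ _A ∈ L, k.choose t := by rw [sum_const, smul_eq_mul]
    _ ≤ ∑ A ∈ L, (m + 1) * #(ownedSubsets F A t) := sum_le_sum fun A hA => by
        obtain ⟨hAF, rfl⟩ := mem_filter.1 hA
        exact choose_le_mul_card_ownedSubsets hF hAF ht hmt
    _ = (m + 1) * #(L.biUnion (ownedSubsets F · t)) := by rw [← mul_sum, card_biUnion hdisj]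
    _ ≤ (m + 1) * n.choose t := Nat.mul_le_mul_left _ hunion

end Focal

theorem ceil_mul_div_succ_le (m k : ℕ) : ⌈(m : ℚ) * k / (m + 1)⌉₊ ≤ k := by
  refine Nat.ceil_le.2 ((div_le_iff₀ (by positivity)).2 ?_)
  nlinarith [(k.cast_nonneg : (0 : ℚ) ≤ k)]

theorem mul_le_succ_mul_ceil (m k : ℕ) : m * k ≤ (m + 1) * ⌈(m : ℚ) * k / (m + 1)⌉₊ := by
  have h := (div_le_iff₀ (by positivity)).1 (Nat.le_ceil ((m : ℚ) * k / (m + 1)))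
  exact_mod_cast h.trans_eq (mul_comm _ _)

theorem card_filter_card_eq_le {n r : ℕ} {F : Finset (Finset (Fin n))} (hr : 2 ≤ r)
    (hF : ¬ ContainsOneFocalFamily F r) (k : ℕ) :
    (#{A ∈ F | #A = k} : ℝ) ≤ ((r : ℝ) - 1) *
      ((n.choose ⌈(((r : ℚ) - 2) * k) / ((r : ℚ) - 1)⌉₊ : ℝ)
        / (k.choose ⌈(((r : ℚ) - 2) * k) / ((r : ℚ) - 1)⌉₊ : ℝ)) := by
  obtain ⟨m, rfl⟩ : ∃ m, r = m + 2 := ⟨r - 2, by omega⟩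
  have hexp : (((m + 2 : ℕ) : ℚ) - 2) * k / (((m + 2 : ℕ) : ℚ) - 1) = (m : ℚ) * k / (m + 1) := by
    push_cast
    ring
  have hcoef : ((m + 2 : ℕ) : ℝ) - 1 = ((m + 1 : ℕ) : ℝ) := by
    push_cast
    ring
  rw [hexp, hcoef, ← mul_div_assoc,
    le_div_iff₀ (by exact_mod_cast Nat.choose_pos (ceil_mul_div_succ_le m k))]
  exact_mod_cast card_filter_card_eq_mul_choose_le hF (ceil_mul_div_succ_le m k)
    (mul_le_succ_mul_ceil m k)

theorem one_focal_upper_bound_sum_general (r n : ℕ) (hr : 3 ≤ r)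
    (F : Finset (Finset (Fin n))) (hF : ¬ ContainsOneFocalFamily F r) :
    (F.card : ℝ) ≤
      ((r : ℝ) - 1) * ∑ k ∈ Finset.range (n + 1),
        (n.choose ⌈(((r : ℚ) - 2) * k) / ((r : ℚ) - 1)⌉₊ : ℝ)
          / (k.choose ⌈(((r : ℚ) - 2) * k) / ((r : ℚ) - 1)⌉₊ : ℝ) := by
  have hlayers : Set.MapsTo card (F : Set (Finset (Fin n))) (range (n + 1)) := fun A _ =>
    mem_range.2 (Nat.lt_succ_of_le ((card_le_univ A).trans_eq (Fintype.card_fin n)))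
  rw [card_eq_sum_card_fiberwise hlayers, Nat.cast_sum, mul_sum]
  exact sum_le_sum fun k _ => card_filter_card_eq_le (by omega) hF k

/-- If `F` is a family of subsets of `[n]` containing no 1-focal family of size `r`, then
`|F| ≤ (r-1)·Σ_{k=0}^{n} C(n,⌈(r-2)k/(r-1)⌉)/C(k,⌈(r-2)k/(r-1)⌉)`. -/
theorem one_focal_upper_bound_sum (r n : ℕ) (hr : 3 ≤ r) (hn : 1 ≤ n)
    (F : Finset (Finset (Fin n))) (hF : ¬ ContainsOneFocalFamily F r) :
    (F.card : ℝ) ≤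
      ((r : ℝ) - 1) * ∑ k ∈ Finset.range (n + 1),
        (n.choose ⌈(((r : ℚ) - 2) * k) / ((r : ℚ) - 1)⌉₊ : ℝ)
          / (k.choose ⌈(((r : ℚ) - 2) * k) / ((r : ℚ) - 1)⌉₊ : ℝ) :=
  one_focal_upper_bound_sum_general r n hr F hF
end
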